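/- Let μ and η be discrete growth rates with μ_{n+1}/μ_n ≤ θ and η_{n+1}/η_n ≤ θ for all n and some θ ≥ 1, let {A_n} be invertible bounded operators on a Banach space X and {‖·‖_k} norms satisfying the two-sided growth bounds ‖Φ_A(m,k)x‖_m ≤ K(μ_m/μ_k)^a ‖x‖_k (m ≥ k) and ‖Φ_A(m,k)x‖_m ≤ K(μ_k/μ_m)^a ‖x‖_k (m ≤ k) for some K, a > 0. Assume the rescaled system y_{n+1}=Q_n^{μ,η} y_n admits an η-dichotomy with respect to the rescaled norms {‖·‖_k^η} with projections {P̃_k} and constants L, ν > 0. Define P_k := Φ_A(k,1) P̃_1 Φ_A(1,k) for k ≥ 1. Then there exists a constant D > 0 (one may take D = K²Lθ^{4a}) such that ‖P_k x‖_k ≤ D‖x‖_k for all k ≥ 1 and all x ∈ X. -/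
import Mathlib


noncomputable section

open Filter Metric Set Topology

variable {X : Type*} [NormedAddCommGroup X] [NormedSpace ℝ X]

/-- A discrete growth rate: strictly increasing, `μ 0 = 1`, `μ n → ∞`. -/
def IsGrowthRate (μ : ℕ → ℝ) : Prop :=
  StrictMono μ ∧ μ 0 = 1 ∧ Filter.Tendsto μ Filter.atTop Filter.atTop

/-- The piecewise linear extension `μ̃` of a growth rate. -/
def tildeExt (μ : ℕ → ℝ) (t : ℝ) : ℝ :=
  μ ⌊t⌋₊ + (t - (⌊t⌋₊ : ℝ)) * (μ (⌊t⌋₊ + 1) - μ ⌊t⌋₊)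

/-- `⌊μ̃⁻¹ t⌋`, i.e. the largest `n` with `μ n ≤ t` (for `t ≥ 1`). -/
def floorInvTilde (μ : ℕ → ℝ) (t : ℝ) : ℕ := sSup {n : ℕ | μ n ≤ t}

/-- `⌊μ̃⁻¹ (η (k-1))⌋ + 1`. -/
def idxQ (μ η : ℕ → ℝ) (k : ℕ) : ℕ := floorInvTilde μ (η (k - 1)) + 1

def evolFwd (A : ℕ → X →L[ℝ] X) (k : ℕ) : ℕ → X →L[ℝ] X
  | 0 => ContinuousLinearMap.id ℝ X
  | n + 1 => (A (k + n)).comp (evolFwd A k n)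

/-- The evolution family `Φ_A(m,k) = A_{m-1} ∘ ⋯ ∘ A_k` for `m ≥ k`. -/
def evol (A : ℕ → X →L[ℝ] X) (m k : ℕ) : X →L[ℝ] X := evolFwd A k (m - k)

def evolFwdE (A : ℕ → X ≃L[ℝ] X) (k : ℕ) : ℕ → X ≃L[ℝ] X
  | 0 => ContinuousLinearEquiv.refl ℝ X
  | n + 1 => (evolFwdE A k n).trans (A (k + n))

/-- Two-sided evolution family of a sequence of invertible operators:
`Φ_A(m,k) = A_{m-1}⋯A_k` for `m > k`, `Id` for `m = k`, `A_m⁻¹⋯A_{k-1}⁻¹` for `m < k`. -/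
def evolEquiv (A : ℕ → X ≃L[ℝ] X) (m k : ℕ) : X ≃L[ℝ] X :=
  if k ≤ m then evolFwdE A k (m - k) else (evolFwdE A m (k - m)).symm

def evolE (A : ℕ → X ≃L[ℝ] X) (m k : ℕ) : X →L[ℝ] X := (evolEquiv A m k : X →L[ℝ] X)

/-- The time-rescaled sequence `Q_n^{μ,η} = Φ_A(⌊μ̃⁻¹(η n)⌋+1, ⌊μ̃⁻¹(η (n-1))⌋+1)`. -/
def Qseq (A : ℕ → X →L[ℝ] X) (μ η : ℕ → ℝ) (n : ℕ) : X →L[ℝ] X :=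
  evol A (idxQ μ η (n + 1)) (idxQ μ η n)

def QseqE (A : ℕ → X ≃L[ℝ] X) (μ η : ℕ → ℝ) (n : ℕ) : X ≃L[ℝ] X :=
  evolEquiv A (idxQ μ η (n + 1)) (idxQ μ η n)

/-- A sequence of norms on `X`. -/
def IsNormFamily (Nrm : ℕ → X → ℝ) : Prop :=
  ∀ k, (∀ x y : X, Nrm k (x + y) ≤ Nrm k x + Nrm k y) ∧
    (∀ (c : ℝ) (x : X), Nrm k (c • x) = |c| * Nrm k x) ∧
    (∀ x : X, Nrm k x = 0 → x = 0)

/-- Each norm in the family is equivalent to the ambient norm. -/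
def NormsEquivalent (Nrm : ℕ → X → ℝ) : Prop :=
  ∀ k, ∃ α β : ℝ, 0 < α ∧ 0 < β ∧ ∀ x : X, α * ‖x‖ ≤ Nrm k x ∧ Nrm k x ≤ β * ‖x‖

/-- (od1)–(od2): a sequence of projections compatible with the dynamics, such that the
restriction of `A k` to `Ker P k` is an isomorphism onto `Ker P (k+1)`. -/
def ProjectionsCompat (A P : ℕ → X →L[ℝ] X) : Prop :=
  (∀ k, 1 ≤ k → (P k).comp (P k) = P k) ∧
  (∀ k, 1 ≤ k → (A k).comp (P k) = (P (k + 1)).comp (A k)) ∧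
  (∀ k, 1 ≤ k → Set.BijOn (⇑(A k)) {x : X | P k x = 0} {x : X | P (k + 1) x = 0})

/-- μ-dichotomy with respect to a sequence of norms, relative to given projections.
For `m ≤ k`, `Φ_A(m,k)(Id - P_k)x` denotes the unique `z ∈ Ker P_m` with
`Φ_A(k,m) z = (Id - P_k) x`. -/
def MuDichotomyNormsWith (μ : ℕ → ℝ) (A P : ℕ → X →L[ℝ] X) (Nrm : ℕ → X → ℝ) : Prop :=
  ProjectionsCompat A P ∧
  ∃ N ν : ℝ, 1 ≤ N ∧ 0 < ν ∧
    (∀ k m : ℕ, 1 ≤ k → k ≤ m → ∀ x : X,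
      Nrm m (evol A m k (P k x)) ≤ N * (μ m / μ k) ^ (-ν) * Nrm k x) ∧
    (∀ m k : ℕ, 1 ≤ m → m ≤ k → ∀ x z : X, P m z = 0 → evol A k m z = x - P k x →
      Nrm m z ≤ N * (μ k / μ m) ^ (-ν) * Nrm k x)

/-- Ordinary dichotomy with respect to a sequence of norms, relative to given projections. -/
def OrdinaryDichotomyNormsWith (A P : ℕ → X →L[ℝ] X) (Nrm : ℕ → X → ℝ) : Prop :=
  ProjectionsCompat A P ∧
  ∃ K : ℝ, 1 ≤ K ∧
    (∀ k m : ℕ, 1 ≤ k → k ≤ m → ∀ x : X, Nrm m (evol A m k (P k x)) ≤ K * Nrm k x) ∧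
    (∀ m k : ℕ, 1 ≤ m → m ≤ k → ∀ x z : X, P m z = 0 → evol A k m z = x - P k x →
      Nrm m z ≤ K * Nrm k x)

/-- μ-dichotomy (with respect to a sequence of norms) of a system of invertible operators. -/
def MuDichotomyNormsE (μ : ℕ → ℝ) (A : ℕ → X ≃L[ℝ] X) (Nrm : ℕ → X → ℝ) : Prop :=
  ∃ P : ℕ → X →L[ℝ] X,
    (∀ k, 1 ≤ k → (P k).comp (P k) = P k) ∧
    (∀ k, 1 ≤ k → ((A k : X →L[ℝ] X)).comp (P k) = (P (k + 1)).comp ((A k : X →L[ℝ] X))) ∧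
    (∀ k, 1 ≤ k → Set.BijOn (⇑(A k)) {x : X | P k x = 0} {x : X | P (k + 1) x = 0}) ∧
    ∃ N ν : ℝ, 1 ≤ N ∧ 0 < ν ∧
      (∀ k m : ℕ, 1 ≤ k → k ≤ m → ∀ x : X,
        Nrm m (evolE A m k (P k x)) ≤ N * (μ m / μ k) ^ (-ν) * Nrm k x) ∧
      (∀ m k : ℕ, 1 ≤ m → m ≤ k → ∀ x : X,
        Nrm m (evolE A m k (x - P k x)) ≤ N * (μ k / μ m) ^ (-ν) * Nrm k x)

/-- μ-dichotomy with respect to the original norm. -/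
def MuDichotomy (μ : ℕ → ℝ) (B : ℕ → X →L[ℝ] X) : Prop :=
  ∃ P : ℕ → X →L[ℝ] X, MuDichotomyNormsWith μ B P fun _ x => ‖x‖

/-- The scaled system `Ã_n = (μ_{n+1}/μ_n)^{-λ} A_n`. -/
def scaledSys (μ : ℕ → ℝ) (A : ℕ → X ≃L[ℝ] X) (l : ℝ) (n : ℕ) : X →L[ℝ] X :=
  ((μ (n + 1) / μ n) ^ (-l)) • (A n : X →L[ℝ] X)

/-- The generalized dichotomy spectrum `Σ_{μD,𝔸}`. -/
def muSpectrum (μ : ℕ → ℝ) (A : ℕ → X ≃L[ℝ] X) : Set ℝ :=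
  {l : ℝ | ¬ MuDichotomy μ (scaledSys μ A l)}

/-- The exponential growth rate `n ↦ e^n`. -/
def expRate : ℕ → ℝ := fun n => Real.exp n

/-- `Σ_{ED,ℚ}`: the Sacker–Sell spectrum of the time-rescaled system. -/
def expSpectrumQ (μ : ℕ → ℝ) (A : ℕ → X ≃L[ℝ] X) : Set ℝ :=
  {l : ℝ | ¬ MuDichotomy expRate fun n => Real.exp (-l) • (QseqE A μ expRate n : X →L[ℝ] X)}

/-- `f` is a homeomorphism. -/
def IsHomeoOf {Y : Type*} [TopologicalSpace Y] (f : Y → Y) : Prop :=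
  ∃ h : Y ≃ₜ Y, ∀ x, h x = f x

/-- The perturbed maps `x ↦ A_n x + g_n x`. -/
def pert (A : ℕ → X ≃L[ℝ] X) (g : ℕ → X → X) (n : ℕ) : X → X := fun x => A n x + g n x

def nlFwd (F : ℕ → X → X) (n : ℕ) : ℕ → X → X
  | 0 => id
  | j + 1 => F (n + j) ∘ nlFwd F n j

/-- Nonlinear evolution `𝒢(m,n) = (A_{m-1}+g_{m-1})∘⋯∘(A_n+g_n)` for `m ≥ n`. -/
def nlEvol (A : ℕ → X ≃L[ℝ] X) (g : ℕ → X → X) (m n : ℕ) : X → X := nlFwd (pert A g) n (m - n)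

def nlBwd (F : ℕ → X → X) (m : ℕ) : ℕ → X → X
  | 0 => id
  | j + 1 => nlBwd F m j ∘ Function.invFun (F (m + j))

/-- Nonlinear evolution `𝒢(m,n) = (A_m+g_m)⁻¹∘⋯∘(A_{n-1}+g_{n-1})⁻¹` for `m ≤ n`. -/
def nlEvolBwd (A : ℕ → X ≃L[ℝ] X) (g : ℕ → X → X) (m n : ℕ) : X → X :=
  nlBwd (pert A g) m (n - m)

/-- The rescaled nonlinearities `f_n`. -/
def fSeq (A : ℕ → X ≃L[ℝ] X) (g : ℕ → X → X) (μ : ℕ → ℝ) (n : ℕ) (x : X) : X :=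
  ∑ j ∈ Finset.Icc (floorInvTilde μ (expRate (n - 1)) + 1) (floorInvTilde μ (expRate n)),
    evolE A (floorInvTilde μ (expRate n) + 1) (j + 1)
      (g j (nlEvol A g j (floorInvTilde μ (expRate (n - 1)) + 1) x))

/-- The class `𝒪_μ^k`, with constant `M`. -/
def InOmegaMu (μ : ℕ → ℝ) (k : ℕ) (f : ℕ → X → X) (M : ℝ) : Prop :=
  (∀ n, ContDiff ℝ (k : ℕ∞) (f n)) ∧ (∀ n, f n 0 = 0) ∧ (∀ n, fderiv ℝ (f n) 0 = 0) ∧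
  ∀ n, 1 ≤ n → ∀ x : X, ∀ j : ℕ, j ≤ k →
    ‖iteratedFDeriv ℝ j (f n) x‖ ≤ M * (μ (n + 1) - μ n) / μ n

/-! ### Auxiliary lemmas -/

lemma evolFwdE_zero (B : ℕ → X ≃L[ℝ] X) (k : ℕ) :
    evolFwdE B k 0 = ContinuousLinearEquiv.refl ℝ X := rfl

lemma evolFwdE_succ (B : ℕ → X ≃L[ℝ] X) (k n : ℕ) :
    evolFwdE B k (n + 1) = (evolFwdE B k n).trans (B (k + n)) := rfl

lemma evolFwdE_add (B : ℕ → X ≃L[ℝ] X) (k a : ℕ) :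
    ∀ b, evolFwdE B k (a + b) = (evolFwdE B k a).trans (evolFwdE B (k + a) b) := by
  intro b
  induction b with
  | zero => ext x; simp [evolFwdE_zero]
  | succ b ih =>
      have : k + (a + b) = (k + a) + b := by omega
      rw [show a + (b + 1) = (a + b) + 1 from rfl, evolFwdE_succ, ih, evolFwdE_succ, this]
      ext x; simp

lemma evolEquiv_self (B : ℕ → X ≃L[ℝ] X) (n : ℕ) :
    evolEquiv B n n = ContinuousLinearEquiv.refl ℝ X := by
  rw [evolEquiv, if_pos le_rfl, Nat.sub_self, evolFwdE_zero]

lemma evolEquiv_of_le (B : ℕ → X ≃L[ℝ] X) {m k : ℕ} (h : k ≤ m) :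
    evolEquiv B m k = evolFwdE B k (m - k) := by
  rw [evolEquiv, if_pos h]

lemma evolEquiv_zero_split (B : ℕ → X ≃L[ℝ] X) {m k : ℕ} (h : k ≤ m) :
    evolEquiv B m 0 = (evolEquiv B k 0).trans (evolEquiv B m k) := by
  rw [evolEquiv_of_le B (Nat.zero_le m), evolEquiv_of_le B (Nat.zero_le k),
    evolEquiv_of_le B h, Nat.sub_zero, Nat.sub_zero,
    show m = k + (m - k) by omega, evolFwdE_add]
  congr 2 <;> omega

lemma evolEquiv_eq (B : ℕ → X ≃L[ℝ] X) (m k : ℕ) :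
    evolEquiv B m k = (evolEquiv B k 0).symm.trans (evolEquiv B m 0) := by
  rcases le_or_gt k m with h | h
  · rw [evolEquiv_zero_split B h]; ext x; simp
  · have h' : m ≤ k := h.le
    rw [evolEquiv, if_neg (by omega), evolEquiv_zero_split B h',
      evolEquiv_of_le B h']
    ext x; simp

lemma evolEquiv_cocycle (B : ℕ → X ≃L[ℝ] X) (m n k : ℕ) :
    evolEquiv B m k = (evolEquiv B n k).trans (evolEquiv B m n) := by
  rw [evolEquiv_eq B m k, evolEquiv_eq B n k, evolEquiv_eq B m n]
  ext x; simp

lemma evolEquiv_symm (B : ℕ → X ≃L[ℝ] X) (m k : ℕ) :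
    (evolEquiv B m k).symm = evolEquiv B k m := by
  rw [evolEquiv_eq B m k, evolEquiv_eq B k m]
  ext x; simp

lemma evolEquiv_succ_self (B : ℕ → X ≃L[ℝ] X) (n : ℕ) :
    evolEquiv B (n + 1) n = B n := by
  rw [evolEquiv_of_le B (Nat.le_succ n), show n.succ - n = 1 by omega, evolFwdE_succ, evolFwdE_zero]
  ext x; simp

lemma evolEquiv_Qseq (A : ℕ → X ≃L[ℝ] X) (μ η : ℕ → ℝ) :
    ∀ n : ℕ, evolEquiv (QseqE A μ η) (n + 1) 1 =
      evolEquiv A (idxQ μ η (n + 1)) (idxQ μ η 1) := by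
  intro n
  induction n with
  | zero => rw [evolEquiv_self, evolEquiv_self]
  | succ n ih =>
      rw [evolEquiv_cocycle (QseqE A μ η) (n + 2) (n + 1) 1, ih,
        evolEquiv_succ_self, QseqE,
        ← evolEquiv_cocycle A (idxQ μ η (n + 2)) (idxQ μ η (n + 1)) (idxQ μ η 1)]

lemma growth_one_le {μ : ℕ → ℝ} (hμ : IsGrowthRate μ) (n : ℕ) : 1 ≤ μ n := by
  rw [← hμ.2.1]; exact hμ.1.monotone (Nat.zero_le n)

lemma growth_set_bdd {μ : ℕ → ℝ} (hμ : IsGrowthRate μ) (t : ℝ) :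
    BddAbove {m : ℕ | μ m ≤ t} := by
  obtain ⟨M, hM⟩ := Filter.eventually_atTop.mp (Filter.tendsto_atTop.mp hμ.2.2 (t + 1))
  refine ⟨M, fun m hm => ?_⟩
  by_contra hc
  have := hM m (by omega)
  simp only [Set.mem_setOf_eq] at hm
  linarith

lemma floorInv_le {μ : ℕ → ℝ} (hμ : IsGrowthRate μ) {t : ℝ} (ht : 1 ≤ t) :
    μ (floorInvTilde μ t) ≤ t :=
  Nat.sSup_mem ⟨0, by simp [hμ.2.1, ht]⟩ (growth_set_bdd hμ t)

lemma lt_floorInv_succ {μ : ℕ → ℝ} (hμ : IsGrowthRate μ) (t : ℝ) :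
    t < μ (floorInvTilde μ t + 1) := by
  by_contra h
  push_neg at h
  have := le_csSup (growth_set_bdd hμ t) (show floorInvTilde μ t + 1 ∈ {m : ℕ | μ m ≤ t} from h)
  rw [floorInvTilde] at this
  omega

lemma le_floorInv {μ : ℕ → ℝ} (hμ : IsGrowthRate μ) {t : ℝ} {m : ℕ} (hm : μ m ≤ t) :
    m ≤ floorInvTilde μ t :=
  le_csSup (growth_set_bdd hμ t) hm

lemma idxQ_one {μ η : ℕ → ℝ} (hμ : IsGrowthRate μ) (hη : IsGrowthRate η) :
    idxQ μ η 1 = 1 := by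
  have h0 : η (1 - 1) = 1 := hη.2.1
  rw [idxQ, h0]
  have : floorInvTilde μ 1 = 0 := by
    refine Nat.le_antisymm ?_ (Nat.zero_le _)
    refine csSup_le ⟨0, by simp [hμ.2.1]⟩ (fun m hm => ?_)
    by_contra hc
    have h1 : μ 0 < μ m := hμ.1 (by omega)
    simp only [Set.mem_setOf_eq] at hm
    rw [hμ.2.1] at h1
    linarith
  omega

lemma Pt_conj (A : ℕ → X ≃L[ℝ] X) (μ η : ℕ → ℝ) (Pt : ℕ → X →L[ℝ] X)
    (hPtc : ∀ k, 1 ≤ k →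
      ((QseqE A μ η k : X →L[ℝ] X)).comp (Pt k) =
        (Pt (k + 1)).comp ((QseqE A μ η k : X →L[ℝ] X))) :
    ∀ n, 1 ≤ n → ∀ y : X,
      evolEquiv (QseqE A μ η) n 1 (Pt 1 ((evolEquiv (QseqE A μ η) n 1).symm y)) = Pt n y := by
  intro n hn
  induction n, hn using Nat.le_induction with
  | base => intro y; simp [evolEquiv_self]
  | succ n hn ih =>
      intro y
      have hsplit : evolEquiv (QseqE A μ η) (n + 1) 1 =
          (evolEquiv (QseqE A μ η) n 1).trans (evolEquiv (QseqE A μ η) (n + 1) n) :=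
        evolEquiv_cocycle _ (n + 1) n 1
      rw [hsplit, evolEquiv_succ_self]
      have hc := DFunLike.congr_fun (hPtc n hn)
        ((QseqE A μ η n).symm y)
      simp only [ContinuousLinearMap.coe_comp', Function.comp_apply,
        ContinuousLinearEquiv.coe_coe] at hc
      have ihy := ih ((QseqE A μ η n).symm y)
      simp only [ContinuousLinearEquiv.trans_apply, ContinuousLinearEquiv.symm_trans_apply]
      rw [ihy, hc, ContinuousLinearEquiv.apply_symm_apply]

/-- boundedness of the projections `P_k = Φ_A(k,1) P̃_1 Φ_A(1,k)`. -/
theorem pulled_back_projections_bounded [CompleteSpace X]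
    (μ η : ℕ → ℝ) (hμ : IsGrowthRate μ) (hη : IsGrowthRate η)
    (θ : ℝ) (hθ : 1 ≤ θ) (hμr : ∀ n, μ (n + 1) / μ n ≤ θ) (hηr : ∀ n, η (n + 1) / η n ≤ θ)
    (A : ℕ → X ≃L[ℝ] X) (Nrm : ℕ → X → ℝ) (hNrm : IsNormFamily Nrm)
    (K a : ℝ) (hK : 0 < K) (ha : 0 < a)
    (hfwd : ∀ k m : ℕ, 1 ≤ k → k ≤ m → ∀ x : X,
      Nrm m (evolE A m k x) ≤ K * (μ m / μ k) ^ a * Nrm k x)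
    (hbwd : ∀ m k : ℕ, 1 ≤ m → m ≤ k → ∀ x : X,
      Nrm m (evolE A m k x) ≤ K * (μ k / μ m) ^ a * Nrm k x)
    (Pt : ℕ → X →L[ℝ] X) (L ν : ℝ) (hL : 0 < L) (hν : 0 < ν)
    (hPtP : ∀ k, 1 ≤ k → (Pt k).comp (Pt k) = Pt k)
    (hPtc : ∀ k, 1 ≤ k →
      ((QseqE A μ η k : X →L[ℝ] X)).comp (Pt k) =
        (Pt (k + 1)).comp ((QseqE A μ η k : X →L[ℝ] X)))
    (hPtb : ∀ k, 1 ≤ k →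
      Set.BijOn (⇑(QseqE A μ η k)) {x : X | Pt k x = 0} {x : X | Pt (k + 1) x = 0})
    (hQ1 : ∀ k m : ℕ, 1 ≤ k → k ≤ m → ∀ x : X,
      Nrm (idxQ μ η m) (evolE (QseqE A μ η) m k (Pt k x)) ≤
        L * (η m / η k) ^ (-ν) * Nrm (idxQ μ η k) x)
    (hQ2 : ∀ m k : ℕ, 1 ≤ m → m ≤ k → ∀ x : X,
      Nrm (idxQ μ η m) (evolE (QseqE A μ η) m k (x - Pt k x)) ≤
        L * (η k / η m) ^ (-ν) * Nrm (idxQ μ η k) x) :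
    ∃ D : ℝ, 0 < D ∧ ∀ k, 1 ≤ k → ∀ x : X,
      Nrm k (evolE A k 1 (Pt 1 (evolE A 1 k x))) ≤ D * Nrm k x := by
  have hθ0 : (0 : ℝ) < θ := lt_of_lt_of_le one_pos hθ
  -- nonnegativity of the norms
  have hN0 : ∀ i (z : X), 0 ≤ Nrm i z := by
    intro i z
    obtain ⟨htri, hsmul, _⟩ := hNrm i
    have h0 : Nrm i 0 = 0 := by
      have := hsmul 0 z
      simpa using this
    have hneg : Nrm i (-z) = Nrm i z := by
      have := hsmul (-1) z
      simpa using this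
    have := htri z (-z)
    rw [add_neg_cancel, h0, hneg] at this
    linarith
  refine ⟨K * K * L * (θ ^ a * θ ^ a), by positivity, ?_⟩
  intro k hk x
  -- choose the maximal n ≥ 1 with idxQ μ η n ≤ k
  set S : Set ℕ := {n : ℕ | 1 ≤ n ∧ idxQ μ η n ≤ k} with hS
  have h1S : 1 ∈ S := ⟨le_rfl, by rw [idxQ_one hμ hη]; exact hk⟩
  have hSbdd : BddAbove S := by
    obtain ⟨N, hN⟩ := Filter.eventually_atTop.mp (Filter.tendsto_atTop.mp hη.2.2 (μ k))
    refine ⟨N + 1, fun n hn => ?_⟩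
    by_contra hc
    push_neg at hc
    obtain ⟨hn1, hnk⟩ := hn
    have hNn : μ k ≤ η (n - 1) := hN (n - 1) (by omega)
    have := le_floorInv hμ hNn
    rw [idxQ] at hnk
    omega
  set n : ℕ := sSup S with hn
  have hnS : n ∈ S := Nat.sSup_mem ⟨1, h1S⟩ hSbdd
  obtain ⟨hn1, hjk⟩ := hnS
  have hnsucc : ¬ (n + 1) ∈ S := fun h => by
    have := le_csSup hSbdd h
    omega
  have hksucc : k < idxQ μ η (n + 1) := by
    by_contra hc
    exact hnsucc ⟨by omega, by omega⟩
  set j : ℕ := idxQ μ η n with hj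
  have hj1 : 1 ≤ j := Nat.le_add_left 1 _
  -- ratio bound: μ k / μ j ≤ θ
  have hμj0 : (0 : ℝ) < μ j := lt_of_lt_of_le one_pos (growth_one_le hμ j)
  have hηn0 : (0 : ℝ) < η (n - 1) := lt_of_lt_of_le one_pos (growth_one_le hη (n - 1))
  have hratio : μ k / μ j ≤ θ := by
    have h1 : η (n - 1) < μ j := lt_floorInv_succ hμ (η (n - 1))
    have h2 : μ k ≤ η n := by
      have h3 : k ≤ floorInvTilde μ (η ((n + 1) - 1)) := by
        rw [idxQ] at hksucc; omega
      have h4 : μ k ≤ μ (floorInvTilde μ (η n)) := by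
        apply hμ.1.monotone
        simpa using h3
      exact h4.trans (floorInv_le hμ (growth_one_le hη n))
    have h5 : η n ≤ θ * η (n - 1) := by
      have := hηr (n - 1)
      rw [show n - 1 + 1 = n by omega] at this
      rw [div_le_iff₀ hηn0] at this
      linarith
    rw [div_le_iff₀ hμj0]
    nlinarith
  have hratio0 : (0 : ℝ) ≤ μ k / μ j := le_of_lt (div_pos (by linarith [growth_one_le hμ k]) hμj0)
  have hrpow : (μ k / μ j) ^ a ≤ θ ^ a := Real.rpow_le_rpow hratio0 hratio ha.le
  have hrpow0 : (0 : ℝ) ≤ (μ k / μ j) ^ a := Real.rpow_nonneg hratio0 a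
  -- rewrite the projection through the dichotomy index
  set y : X := evolEquiv A j k x with hy
  have hAQ : evolEquiv A j 1 = evolEquiv (QseqE A μ η) n 1 := by
    rw [show n = (n - 1) + 1 by omega, evolEquiv_Qseq A μ η (n - 1), idxQ_one hμ hη,
      show n - 1 + 1 = n by omega]
  have hkey : evolE A k 1 (Pt 1 (evolE A 1 k x)) = evolEquiv A k j (Pt n y) := by
    have h1 : evolEquiv A k 1 = (evolEquiv A j 1).trans (evolEquiv A k j) :=
      evolEquiv_cocycle A k j 1
    have h2 : evolEquiv A 1 k = (evolEquiv A j k).trans (evolEquiv A 1 j) :=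
      evolEquiv_cocycle A 1 j k
    have h3 : evolEquiv A 1 j = (evolEquiv A j 1).symm := (evolEquiv_symm A j 1).symm
    simp only [evolE, ContinuousLinearEquiv.coe_coe, h1, h2, h3,
      ContinuousLinearEquiv.trans_apply]
    rw [hAQ]
    rw [Pt_conj A μ η Pt hPtc n hn1 y]
  rw [hkey]
  -- chain of estimates
  have hstep1 : Nrm k (evolEquiv A k j (Pt n y)) ≤ K * (μ k / μ j) ^ a * Nrm j (Pt n y) := by
    have := hfwd j k hj1 hjk (Pt n y)
    simpa [evolE] using this
  have hstep2 : Nrm j (Pt n y) ≤ L * Nrm j y := by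
    have := hQ1 n n hn1 le_rfl y
    have hηn : (0 : ℝ) < η n := lt_of_lt_of_le one_pos (growth_one_le hη n)
    rw [evolE, evolEquiv_self, div_self (ne_of_gt hηn), Real.one_rpow, mul_one] at this
    simpa using this
  have hstep3 : Nrm j y ≤ K * (μ k / μ j) ^ a * Nrm k x := by
    have := hbwd j k hj1 hjk x
    simpa [evolE, hy] using this
  have hc0 : (0 : ℝ) ≤ K * (μ k / μ j) ^ a := by positivity
  have hcθ : K * (μ k / μ j) ^ a ≤ K * θ ^ a := by
    apply mul_le_mul_of_nonneg_left hrpow hK.le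
  have hθa0 : (0 : ℝ) ≤ θ ^ a := Real.rpow_nonneg hθ0.le a
  calc Nrm k (evolEquiv A k j (Pt n y))
      ≤ K * (μ k / μ j) ^ a * Nrm j (Pt n y) := hstep1
    _ ≤ K * (μ k / μ j) ^ a * (L * Nrm j y) :=
        mul_le_mul_of_nonneg_left hstep2 hc0
    _ ≤ K * (μ k / μ j) ^ a * (L * (K * (μ k / μ j) ^ a * Nrm k x)) := by
        apply mul_le_mul_of_nonneg_left _ hc0
        exact mul_le_mul_of_nonneg_left hstep3 hL.le
    _ ≤ K * θ ^ a * (L * (K * θ ^ a * Nrm k x)) := by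
        have h1 : K * (μ k / μ j) ^ a * Nrm k x ≤ K * θ ^ a * Nrm k x :=
          mul_le_mul_of_nonneg_right hcθ (hN0 k x)
        have h2 : L * (K * (μ k / μ j) ^ a * Nrm k x) ≤ L * (K * θ ^ a * Nrm k x) :=
          mul_le_mul_of_nonneg_left h1 hL.le
        calc K * (μ k / μ j) ^ a * (L * (K * (μ k / μ j) ^ a * Nrm k x))
            ≤ K * (μ k / μ j) ^ a * (L * (K * θ ^ a * Nrm k x)) :=
              mul_le_mul_of_nonneg_left h2 hc0
          _ ≤ K * θ ^ a * (L * (K * θ ^ a * Nrm k x)) := by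
              apply mul_le_mul_of_nonneg_right hcθ
              have := hN0 k x
              have : 0 ≤ K * θ ^ a * Nrm k x := by positivity
              nlinarith [hL.le]
    _ = K * K * L * (θ ^ a * θ ^ a) * Nrm k x := by ring

end
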